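/- arXiv:1709.02097 — 9 statements merged into one kernel-verified Lean document; each statement's English description precedes it below -/
import Mathlib

section
/- A partial choice c on U with domain Ω has the (α)-lifting property if and only if the following two conditions hold: (a) for all A, B ∈ Ω, A ⊆ B implies A ∩ c(B) ⊆ c(A); and (b) for every nonempty family 𝓑 ⊆ Ω that is ⊆-closed w.r.t. Ω, one has (⋃𝓑) \ ⋃_{B ∈ 𝓑} c̄(B) ≠ ∅. -/
/-- A partial choice `c` on `U` with domain `Ω` has the (α)-lifting property iff
(a) for all `A, B ∈ Ω`, `A ⊆ B → A ∩ c B ⊆ c A`, and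
(b) for every nonempty `𝓑 ⊆ Ω` that is ⊆-closed w.r.t. `Ω`,
`(⋃𝓑) \ ⋃_{B ∈ 𝓑} c̄(B) ≠ ∅`. -/
theorem stmt2 {α : Type*} [Nonempty α] (Ω : Set (Set α)) (hΩ : Ω.Nonempty)
    (hmem : ∀ B ∈ Ω, B.Nonempty) (c : Set α → Set α)
    (hc : ∀ B ∈ Ω, (c B).Nonempty ∧ c B ⊆ B) :
    (∃ c' : Set α → Set α,
        (∀ A : Set α, A.Nonempty → (c' A).Nonempty ∧ c' A ⊆ A) ∧
        (∀ B ∈ Ω, c' B = c B) ∧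
        (∀ A B : Set α, A.Nonempty → B.Nonempty → A ⊆ B → A ∩ c' B ⊆ c' A)) ↔
      ((∀ A ∈ Ω, ∀ B ∈ Ω, A ⊆ B → A ∩ c B ⊆ c A) ∧
       (∀ 𝓑 ⊆ Ω, 𝓑.Nonempty → (∀ B ∈ Ω, B ⊆ ⋃₀ 𝓑 → B ∈ 𝓑) →
          (⋃₀ 𝓑 \ ⋃ B ∈ 𝓑, (B \ c B)).Nonempty)) := by
  constructor
  · rintro ⟨c', hne, hext, halpha⟩
    constructor
    · intro A hA B hB hAB
      have h := halpha A B (hmem A hA) (hmem B hB) hAB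
      rwa [hext A hA, hext B hB] at h
    · rintro 𝓑 h𝓑Ω ⟨B0, hB0⟩ hclosed
      have hSne : (⋃₀ 𝓑).Nonempty := by
        obtain ⟨x, hx⟩ := hmem B0 (h𝓑Ω hB0)
        exact ⟨x, B0, hB0, hx⟩
      obtain ⟨x, hx⟩ := (hne _ hSne).1
      refine ⟨x, (hne _ hSne).2 hx, ?_⟩
      simp only [Set.mem_iUnion, Set.mem_diff, not_exists]
      rintro B hB𝓑 ⟨hxB, hxc⟩
      have hBΩ : B ∈ Ω := h𝓑Ω hB𝓑
      have hBsub : B ⊆ ⋃₀ 𝓑 := fun y hy => ⟨B, hB𝓑, hy⟩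
      have : x ∈ c' B := halpha B (⋃₀ 𝓑) (hmem B hBΩ) hSne hBsub ⟨hxB, hx⟩
      rw [hext B hBΩ] at this
      exact hxc this
  · rintro ⟨ha, hb⟩
    refine ⟨fun A => A \ ⋃ B ∈ {B | B ∈ Ω ∧ B ⊆ A}, (B \ c B), ?_, ?_, ?_⟩
    · intro A hA
      refine ⟨?_, Set.diff_subset⟩
      by_cases h : {B | B ∈ Ω ∧ B ⊆ A}.Nonempty
      · have hclosed : ∀ B ∈ Ω, B ⊆ ⋃₀ {B | B ∈ Ω ∧ B ⊆ A} → B ∈ {B | B ∈ Ω ∧ B ⊆ A} := by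
          intro B hB hsub
          refine ⟨hB, hsub.trans ?_⟩
          rintro y ⟨D, ⟨hDΩ, hDA⟩, hy⟩
          exact hDA hy
        obtain ⟨x, hx1, hx2⟩ := hb _ (fun B hB => hB.1) h hclosed
        refine ⟨x, ?_, ?_⟩
        · obtain ⟨D, ⟨hDΩ, hDA⟩, hx⟩ := hx1
          exact hDA hx
        · intro hx
          exact hx2 hx
      · obtain ⟨x, hx⟩ := hA
        refine ⟨x, hx, ?_⟩
        simp only [Set.mem_iUnion]
        rintro ⟨B, hB, -⟩
        exact h ⟨B, hB⟩
    · intro B hB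
      ext x
      simp only [Set.mem_diff, Set.mem_iUnion, not_exists]
      constructor
      · rintro ⟨hxB, hrej⟩
        by_contra hxc
        exact hrej B ⟨hB, le_refl B⟩ ⟨hxB, hxc⟩
      · intro hxc
        refine ⟨(hc B hB).2 hxc, ?_⟩
        rintro D ⟨hDΩ, hDB⟩ ⟨hxD, hxcD⟩
        exact hxcD (ha D hDΩ B hB hDB ⟨hxD, hxc⟩)
    · intro A B hA hB hAB x hx
      obtain ⟨hxA, hxB, hrej⟩ := hx
      refine ⟨hxA, ?_⟩
      simp only [Set.mem_iUnion, not_exists] at hrej ⊢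
      rintro D ⟨hDΩ, hDA⟩ hxD
      exact hrej D ⟨hDΩ, hDA.trans hAB⟩ hxD
end

section
/- Let c be a choice on U with domain Ω satisfying: (a) for all A, B ∈ Ω, A ⊆ B implies A ∩ c(B) ⊆ c(A); and (b) for every nonempty family 𝓑 ⊆ Ω that is ⊆-closed w.r.t. Ω, one has (⋃𝓑) \ ⋃_{B ∈ 𝓑} c̄(B) ≠ ∅. Define c⁺(A) := A \ ⋃_{B ∈ Ω, B ⊆ A} c̄(B) for every nonempty A ⊆ U. Then c⁺ is a total choice on U (i.e., ∅ ≠ c⁺(A) ⊆ A for every nonempty A ⊆ U), c⁺(B) = c(B) for every B ∈ Ω, and c⁺ satisfies axiom (α). -/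
/-- Under conditions (a) and (b), the map `c⁺(A) := A \ ⋃_{B ∈ Ω, B ⊆ A} c̄(B)` is a
total choice on `U` extending `c` and satisfying axiom (α). -/
theorem stmt3 {α : Type*} [Nonempty α] (Ω : Set (Set α)) (hΩ : Ω.Nonempty)
    (hmem : ∀ B ∈ Ω, B.Nonempty) (c : Set α → Set α)
    (hc : ∀ B ∈ Ω, (c B).Nonempty ∧ c B ⊆ B)
    (ha : ∀ A ∈ Ω, ∀ B ∈ Ω, A ⊆ B → A ∩ c B ⊆ c A)
    (hb : ∀ 𝓑 ⊆ Ω, 𝓑.Nonempty → (∀ B ∈ Ω, B ⊆ ⋃₀ 𝓑 → B ∈ 𝓑) →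
      (⋃₀ 𝓑 \ ⋃ B ∈ 𝓑, (B \ c B)).Nonempty)
    (cplus : Set α → Set α)
    (hdef : ∀ A : Set α, cplus A = A \ ⋃ B ∈ {B ∈ Ω | B ⊆ A}, (B \ c B)) :
    (∀ A : Set α, A.Nonempty → (cplus A).Nonempty ∧ cplus A ⊆ A) ∧
    (∀ B ∈ Ω, cplus B = c B) ∧
    (∀ A B : Set α, A.Nonempty → B.Nonempty → A ⊆ B → A ∩ cplus B ⊆ cplus A) := by
  refine ⟨?_, ?_, ?_⟩
  · intro A hA
    constructor
    · set 𝓑 : Set (Set α) := {B ∈ Ω | B ⊆ A} with h𝓑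
      by_cases hne : 𝓑.Nonempty
      · have hsub : 𝓑 ⊆ Ω := fun B hB => hB.1
        have hUA : ⋃₀ 𝓑 ⊆ A := by
          intro x ⟨B, hB, hxB⟩; exact hB.2 hxB
        have hcl : ∀ B ∈ Ω, B ⊆ ⋃₀ 𝓑 → B ∈ 𝓑 := fun B hB hBU =>
          ⟨hB, hBU.trans hUA⟩
        obtain ⟨x, hx1, hx2⟩ := hb 𝓑 hsub hne hcl
        refine ⟨x, ?_⟩
        rw [hdef A]
        exact ⟨hUA hx1, hx2⟩
      · obtain ⟨x, hx⟩ := hA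
        refine ⟨x, ?_⟩
        rw [hdef A]
        refine ⟨hx, ?_⟩
        simp only [Set.mem_iUnion]
        rintro ⟨B, hB, -⟩
        exact hne ⟨B, hB⟩
    · rw [hdef A]; exact Set.diff_subset
  · intro B hB
    rw [hdef B]
    apply Set.eq_of_subset_of_subset
    · rintro x ⟨hxB, hx⟩
      simp only [Set.mem_iUnion] at hx
      by_contra hxc
      exact hx ⟨B, ⟨hB, le_refl B⟩, hxB, hxc⟩
    · intro x hx
      refine ⟨(hc B hB).2 hx, ?_⟩
      simp only [Set.mem_iUnion]
      rintro ⟨B', ⟨hB', hB'B⟩, hxB', hxc⟩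
      exact hxc (ha B' hB' B hB hB'B ⟨hxB', hx⟩)
  · intro A B hA hB hAB x ⟨hxA, hxB⟩
    rw [hdef B] at hxB
    rw [hdef A]
    refine ⟨hxA, ?_⟩
    have hxB2 := hxB.2
    simp only [Set.mem_iUnion] at hxB2 ⊢
    rintro ⟨B', ⟨hB', hB'A⟩, hx⟩
    exact hxB2 ⟨B', ⟨hB', hB'A.trans hAB⟩, hx⟩
end

section
/- A partial choice on U has the (β)-lifting property if and only if it satisfies axiom (β). -/
open Set

namespace Stmt4Aux

variable {α : Type*}

/-- Admissibility of a graph `G` of a partial choice extending `c` on `Ω`. -/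
def Adm (Ω : Set (Set α)) (c : Set α → Set α) (G : Set (Set α × Set α)) : Prop :=
  (∀ B S S', (B, S) ∈ G → (B, S') ∈ G → S = S') ∧
  (∀ B S, (B, S) ∈ G → S.Nonempty ∧ S ⊆ B) ∧
  (∀ A S B T, (A, S) ∈ G → (B, T) ∈ G → A ⊆ B → (S ∩ T).Nonempty → S ⊆ T) ∧
  (∀ B ∈ Ω, (B, c B) ∈ G)

/-- One-step extension: given an admissible partial β-choice and a nonempty set `A`,
we can find a value `S` for `A` compatible with axiom (β) in both directions. -/
lemma extend_step (G : Set (Set α × Set α))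
    (hval : ∀ B S, (B, S) ∈ G → S.Nonempty ∧ S ⊆ B)
    (hβ : ∀ A S B T, (A, S) ∈ G → (B, T) ∈ G → A ⊆ B → (S ∩ T).Nonempty → S ⊆ T)
    (A : Set α) (hA : A.Nonempty) :
    ∃ S : Set α, S.Nonempty ∧ S ⊆ A ∧
      (∀ B T, (B, T) ∈ G → A ⊆ B → (S ∩ T).Nonempty → S ⊆ T) ∧
      (∀ B T, (B, T) ∈ G → B ⊆ A → (T ∩ S).Nonempty → T ⊆ S) := by
  classical
  set X : Set α := {x | ∃ C T, (C, T) ∈ G ∧ A ⊆ C ∧ x ∈ T} with hX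
  by_cases hdiff : (A \ X).Nonempty
  · -- Case 1: take `A \ X`.
    refine ⟨A \ X, hdiff, diff_subset, ?_, ?_⟩
    · rintro B T hBT hAB ⟨x, hxS, hxT⟩
      exact absurd ⟨B, T, hBT, hAB, hxT⟩ hxS.2
    · rintro B T hBT hBA ⟨x, hxT, hxS⟩
      have hTX : ∀ y ∈ T, y ∉ X := by
        rintro y hyT ⟨C, R, hCR, hAC, hyR⟩
        have hTR : T ⊆ R := hβ B T C R hBT hCR (hBA.trans hAC) ⟨y, hyT, hyR⟩
        exact hxS.2 ⟨C, R, hCR, hAC, hTR hxT⟩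
      exact fun y hy => ⟨(hval B T hBT).2.trans hBA hy, hTX y hy⟩
  · -- Case 2: `A ⊆ X`; take the connected component of a point of `A`.
    have hAX : A ⊆ X := by
      intro x hx
      by_contra hxX
      exact hdiff ⟨x, hx, hxX⟩
    obtain ⟨a, ha⟩ := hA
    set E : α → α → Prop := fun x y => ∃ B T, (B, T) ∈ G ∧ B ⊆ A ∧ x ∈ T ∧ y ∈ T with hE
    set S : Set α := {x | Relation.ReflTransGen E a x} with hS
    have haS : a ∈ S := Relation.ReflTransGen.refl
    have hSA : S ⊆ A := by
      intro x hx
      induction hx with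
      | refl => exact ha
      | tail _ h2 _ =>
        obtain ⟨B, T, hBT, hBA, _, hyT⟩ := h2
        exact hBA ((hval B T hBT).2 hyT)
    -- membership in any `R` above `A` is constant along components
    have key : ∀ C R, (C, R) ∈ G → A ⊆ C → ∀ x ∈ S, (x ∈ R ↔ a ∈ R) := by
      intro C R hCR hAC x hx
      induction hx with
      | refl => exact Iff.rfl
      | tail _ h2 ih =>
        obtain ⟨B, T, hBT, hBA, hyT, hzT⟩ := h2
        have step : ∀ u ∈ T, u ∈ R → T ⊆ R := fun u hu hur =>
          hβ B T C R hBT hCR (hBA.trans hAC) ⟨u, hu, hur⟩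
        constructor
        · intro hz; exact ih.mp (step _ hzT hz hyT)
        · intro haR; exact step _ hyT (ih.mpr haR) hzT
    refine ⟨S, ⟨a, haS⟩, hSA, ?_, ?_⟩
    · rintro C R hCR hAC ⟨x, hxS, hxR⟩
      have haR : a ∈ R := (key C R hCR hAC x hxS).mp hxR
      intro y hyS
      exact (key C R hCR hAC y hyS).mpr haR
    · rintro B T hBT hBA ⟨x, hxT, hxS⟩
      intro y hyT
      exact Relation.ReflTransGen.tail hxS ⟨B, T, hBT, hBA, hxT, hyT⟩

end Stmt4Aux

open Stmt4Aux in
/-- A partial choice on `U` has the (β)-lifting property iff it satisfies axiom (β). -/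
theorem stmt4 {α : Type*} [Nonempty α] (Ω : Set (Set α)) (hΩ : Ω.Nonempty)
    (hmem : ∀ B ∈ Ω, B.Nonempty) (c : Set α → Set α)
    (hc : ∀ B ∈ Ω, (c B).Nonempty ∧ c B ⊆ B) :
    (∃ c' : Set α → Set α,
        (∀ A : Set α, A.Nonempty → (c' A).Nonempty ∧ c' A ⊆ A) ∧
        (∀ B ∈ Ω, c' B = c B) ∧
        (∀ A B : Set α, A.Nonempty → B.Nonempty → A ⊆ B →
          (c' A ∩ c' B).Nonempty → c' A ⊆ c' B)) ↔
      (∀ A ∈ Ω, ∀ B ∈ Ω, A ⊆ B → (c A ∩ c B).Nonempty → c A ⊆ c B) := by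
  classical
  constructor
  · rintro ⟨c', _, hagree, hβ'⟩ A hA B hB hAB hne
    have hA' := hagree A hA
    have hB' := hagree B hB
    rw [← hA', ← hB'] at hne ⊢
    exact hβ' A B (hmem A hA) (hmem B hB) hAB hne
  · intro hβ
    -- Zorn's lemma on admissible graphs
    set P : Set (Set (Set α × Set α)) := {G | Adm Ω c G} with hP
    have hG0 : ({p : Set α × Set α | p.1 ∈ Ω ∧ p.2 = c p.1}) ∈ P := by
      refine ⟨?_, ?_, ?_, ?_⟩
      · rintro B S S' ⟨_, h1⟩ ⟨_, h2⟩; simp only at h1 h2; rw [h1, h2]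
      · rintro B S ⟨hB, h1⟩; simp only at h1; subst h1; exact hc B hB
      · rintro A S B T ⟨hA, h1⟩ ⟨hB, h2⟩ hAB hne
        simp only at h1 h2; subst h1; subst h2
        exact hβ A hA B hB hAB hne
      · exact fun B hB => ⟨hB, rfl⟩
    have hchain : ∀ ch ⊆ P, IsChain (· ⊆ ·) ch → ch.Nonempty →
        ∃ ub ∈ P, ∀ s ∈ ch, s ⊆ ub := by
      intro ch hchP hch hchne
      refine ⟨⋃₀ ch, ⟨?_, ?_, ?_, ?_⟩, fun s hs => subset_sUnion_of_mem hs⟩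
      · rintro B S S' ⟨G1, hG1, h1⟩ ⟨G2, hG2, h2⟩
        rcases hch.total hG1 hG2 with h | h
        · exact (hchP hG2).1 B S S' (h h1) h2
        · exact (hchP hG1).1 B S S' h1 (h h2)
      · rintro B S ⟨G1, hG1, h1⟩; exact (hchP hG1).2.1 B S h1
      · rintro A S B T ⟨G1, hG1, h1⟩ ⟨G2, hG2, h2⟩ hAB hne
        rcases hch.total hG1 hG2 with h | h
        · exact (hchP hG2).2.2.1 A S B T (h h1) h2 hAB hne
        · exact (hchP hG1).2.2.1 A S B T h1 (h h2) hAB hne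
      · obtain ⟨G1, hG1⟩ := hchne
        exact fun B hB => ⟨G1, hG1, (hchP hG1).2.2.2 B hB⟩
    obtain ⟨m, hG0m, hm⟩ := zorn_subset_nonempty P hchain _ hG0
    obtain ⟨hmfunc, hmval, hmβ, hmbase⟩ := hm.prop
    -- maximal element is total
    have htot : ∀ A : Set α, A.Nonempty → ∃ S, (A, S) ∈ m := by
      intro A hA
      by_contra hnot
      push_neg at hnot
      obtain ⟨S, hSne, hSA, hup, hdown⟩ := extend_step m hmval hmβ A hA
      have hm' : insert (A, S) m ∈ P := by
        refine ⟨?_, ?_, ?_, ?_⟩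
        · rintro B T T' (h1 | h1) (h2 | h2)
          · injection h1 with hB hT; injection h2 with hB' hT'
            rw [hT, hT']
          · injection h1 with hB hT
            subst hB; exact absurd h2 (hnot T')
          · injection h2 with hB hT
            subst hB; exact absurd h1 (hnot T)
          · exact hmfunc B T T' h1 h2
        · rintro B T (h1 | h1)
          · injection h1 with hB hT
            subst hB; subst hT; exact ⟨hSne, hSA⟩
          · exact hmval B T h1
        · rintro B T B' T' (h1 | h1) (h2 | h2) hBB' hne
          · injection h1 with hB hT
            injection h2 with hB' hT'
            subst hB; subst hT; subst hB'; subst hT'; exact fun _ h => h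
          · injection h1 with hB hT
            subst hB; subst hT
            exact hup B' T' h2 hBB' hne
          · injection h2 with hB' hT'
            subst hB'; subst hT'
            exact hdown B T h1 hBB' hne
          · exact hmβ B T B' T' h1 h2 hBB' hne
        · exact fun B hB => Or.inr (hmbase B hB)
      have := hm.eq_of_subset hm' (subset_insert _ _)
      exact hnot S (this ▸ mem_insert _ _)
    -- build the total choice
    set c' : Set α → Set α := fun A =>
      if h : A.Nonempty then (htot A h).choose else ∅ with hc'
    have hc'mem : ∀ A : Set α, A.Nonempty → (A, c' A) ∈ m := by
      intro A hA
      simp only [hc', dif_pos hA]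
      exact (htot A hA).choose_spec
    refine ⟨c', ?_, ?_, ?_⟩
    · intro A hA; exact hmval A (c' A) (hc'mem A hA)
    · intro B hB
      exact hmfunc B (c' B) (c B) (hc'mem B (hmem B hB)) (hmbase B hB)
    · intro A B hA hB hAB hne
      exact hmβ A (c' A) B (c' B) (hc'mem A hA) (hc'mem B hB) hAB hne
end

section
/- Let c be a choice on U with domain Ω satisfying axiom (β), let A ∈ Ω, and let B₀, B₁, …, Bₙ ∈ Ω be menus with B₀ = A, Bᵢ ⊆ A for every i ≤ n, and c(Bᵢ) ∩ c(Bᵢ₊₁) ≠ ∅ for every i < n. Then c(Bₙ) ⊆ c(A). -/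
/-- Chain property underlying the (β)-lifting construction: if `c` satisfies axiom (β),
`B₀ = A`, each `Bᵢ ∈ Ω` is contained in `A ∈ Ω`, and consecutive choice sets intersect,
then `c(Bₙ) ⊆ c(A)`. -/
theorem stmt5 {α : Type*} [Nonempty α] (Ω : Set (Set α)) (hΩ : Ω.Nonempty)
    (hmem : ∀ B ∈ Ω, B.Nonempty) (c : Set α → Set α)
    (hc : ∀ B ∈ Ω, (c B).Nonempty ∧ c B ⊆ B)
    (hβ : ∀ A ∈ Ω, ∀ B ∈ Ω, A ⊆ B → (c A ∩ c B).Nonempty → c A ⊆ c B)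
    (A : Set α) (hA : A ∈ Ω) (n : ℕ) (B : ℕ → Set α)
    (hB0 : B 0 = A) (hBmem : ∀ i ≤ n, B i ∈ Ω) (hBsub : ∀ i ≤ n, B i ⊆ A)
    (hchain : ∀ i < n, (c (B i) ∩ c (B (i + 1))).Nonempty) :
    c (B n) ⊆ c A := by
  have key : ∀ i ≤ n, c (B i) ⊆ c A := by
    intro i hi
    induction i with
    | zero => rw [hB0]
    | succ k ih =>
      have hk : k ≤ n := Nat.le_of_succ_le hi
      have ihk := ih hk
      obtain ⟨x, hx1, hx2⟩ := hchain k (Nat.lt_of_succ_le hi)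
      exact hβ (B (k+1)) (hBmem _ hi) A hA (hBsub _ hi) ⟨x, hx2, ihk hx1⟩
  exact key n le_rfl
end

section
/- A partial choice c on U with domain Ω has the WARP-lifting property if and only if there exists a total Noetherian preorder ≲ on the collection 𝓔 of Euler's regions of Ω⁺ := Ω ∪ {c(B) : B ∈ Ω} such that, for all B ∈ Ω and E, E' ∈ 𝓔: (a) if E ⊆ B and E' ⊆ c(B), then E ≲ E'; and (b) if E is ≲-maximal in env_𝓔(B) := {E'' ∈ 𝓔 : E'' ∩ B ≠ ∅}, then E ⊆ c(B). -/
/-- The Euler diagram of a family `S` of sets: all nonempty sets of the form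
`⋂Γ \ ⋃(S \ Γ)` for nonempty `Γ ⊆ S`. -/
def eulerRegions {α : Type*} (S : Set (Set α)) : Set (Set α) :=
  {E | E.Nonempty ∧ ∃ Γ ⊆ S, Γ.Nonempty ∧ E = ⋂₀ Γ \ ⋃₀ (S \ Γ)}

namespace Stmt6Aux

variable {α : Type*}

/-- The Euler region containing `x`. -/
def rgn (S : Set (Set α)) (x : α) : Set α :=
  ⋂₀ {B ∈ S | x ∈ B} \ ⋃₀ (S \ {B ∈ S | x ∈ B})

lemma mem_rgn {S : Set (Set α)} {x : α} : x ∈ rgn S x := by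
  constructor
  · intro B hB; exact hB.2
  · rintro ⟨B, ⟨hBS, hBn⟩, hxB⟩; exact hBn ⟨hBS, hxB⟩

lemma rgn_mem {S : Set (Set α)} {x : α} (hx : x ∈ ⋃₀ S) :
    rgn S x ∈ eulerRegions S := by
  refine ⟨⟨x, mem_rgn⟩, {B ∈ S | x ∈ B}, fun B hB => hB.1, ?_, rfl⟩
  obtain ⟨B, hBS, hxB⟩ := hx
  exact ⟨B, hBS, hxB⟩

lemma rgn_subset {S : Set (Set α)} {x : α} {B : Set α} (hBS : B ∈ S) (hxB : x ∈ B) :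
    rgn S x ⊆ B := fun _ hy => hy.1 B ⟨hBS, hxB⟩

lemma region_subset_sUnion {S : Set (Set α)} {E : Set α} (hE : E ∈ eulerRegions S) :
    E ⊆ ⋃₀ S := by
  obtain ⟨-, Γ, hΓS, ⟨B, hB⟩, rfl⟩ := hE
  exact fun y hy => ⟨B, hΓS hB, hy.1 B hB⟩

lemma region_dichotomy {S : Set (Set α)} {E B : Set α} (hE : E ∈ eulerRegions S)
    (hBS : B ∈ S) (hmeet : (E ∩ B).Nonempty) : E ⊆ B := by
  obtain ⟨-, Γ, hΓS, -, rfl⟩ := hE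
  by_cases hBΓ : B ∈ Γ
  · exact fun y hy => hy.1 B hBΓ
  · obtain ⟨z, hzE, hzB⟩ := hmeet
    exact (hzE.2 ⟨B, ⟨hBS, hBΓ⟩, hzB⟩).elim

lemma region_eq_rgn {S : Set (Set α)} {E : Set α} {z : α} (hE : E ∈ eulerRegions S)
    (hz : z ∈ E) : E = rgn S z := by
  obtain ⟨-, Γ, hΓS, -, rfl⟩ := hE
  have hΓ : Γ = {B ∈ S | z ∈ B} := by
    ext B
    constructor
    · intro hB; exact ⟨hΓS hB, hz.1 B hB⟩
    · rintro ⟨hBS, hzB⟩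
      by_contra hBΓ
      exact hz.2 ⟨B, ⟨hBS, hBΓ⟩, hzB⟩
  rw [rgn, ← hΓ]

end Stmt6Aux

open Stmt6Aux in
/-- A partial choice `c` on `U` with domain `Ω` has the WARP-lifting property iff there
is a total Noetherian preorder `r` on the Euler regions `𝓔` of `Ω ∪ c[Ω]` such that:
(a) if `E ⊆ B` and `E' ⊆ c(B)` for `B ∈ Ω`, then `E r E'`; and
(b) if `E` is `r`-maximal in `env_𝓔(B) = {E'' ∈ 𝓔 : E'' ∩ B ≠ ∅}`, then `E ⊆ c(B)`. -/
theorem stmt6 {α : Type*} [Nonempty α] (Ω : Set (Set α)) (hΩ : Ω.Nonempty)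
    (hmem : ∀ B ∈ Ω, B.Nonempty) (c : Set α → Set α)
    (hc : ∀ B ∈ Ω, (c B).Nonempty ∧ c B ⊆ B) :
    (∃ c' : Set α → Set α,
        (∀ A : Set α, A.Nonempty → (c' A).Nonempty ∧ c' A ⊆ A) ∧
        (∀ B ∈ Ω, c' B = c B) ∧
        (∀ A B : Set α, A.Nonempty → B.Nonempty → A ⊆ B →
          (A ∩ c' B).Nonempty → c' A = A ∩ c' B)) ↔
      (∃ r : Set α → Set α → Prop,
        (∀ E ∈ eulerRegions (Ω ∪ c '' Ω), r E E) ∧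
        (∀ E ∈ eulerRegions (Ω ∪ c '' Ω), ∀ F ∈ eulerRegions (Ω ∪ c '' Ω),
          ∀ G ∈ eulerRegions (Ω ∪ c '' Ω), r E F → r F G → r E G) ∧
        (∀ E ∈ eulerRegions (Ω ∪ c '' Ω), ∀ F ∈ eulerRegions (Ω ∪ c '' Ω),
          r E F ∨ r F E) ∧
        (∀ S ⊆ eulerRegions (Ω ∪ c '' Ω), S.Nonempty →
          ∃ m ∈ S, ∀ e ∈ S, r m e → r e m) ∧
        (∀ B ∈ Ω, ∀ E ∈ eulerRegions (Ω ∪ c '' Ω), ∀ E' ∈ eulerRegions (Ω ∪ c '' Ω),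
          E ⊆ B → E' ⊆ c B → r E E') ∧
        (∀ B ∈ Ω, ∀ E ∈ eulerRegions (Ω ∪ c '' Ω),
          (E ∈ {E'' ∈ eulerRegions (Ω ∪ c '' Ω) | (E'' ∩ B).Nonempty} ∧
            ∀ e ∈ {E'' ∈ eulerRegions (Ω ∪ c '' Ω) | (E'' ∩ B).Nonempty},
              r E e → r e E) → E ⊆ c B)) := by
  set 𝓢 : Set (Set α) := Ω ∪ c '' Ω with h𝓢
  constructor
  · -- Forward direction
    rintro ⟨c', h1, h2, h3⟩
    -- the revealed preference on elements
    set le : α → α → Prop := fun x y => y ∈ c' {x, y} with hle_def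
    have hpair : ∀ x y : α, ({x, y} : Set α).Nonempty := fun x y => ⟨x, by simp⟩
    -- (i) chosen elements are above everything
    have hle1 : ∀ {A : Set α} {x y : α}, A.Nonempty → x ∈ A → y ∈ c' A → le x y := by
      intro A x y hA hx hy
      have hyA : y ∈ A := (h1 A hA).2 hy
      have hsub : ({x, y} : Set α) ⊆ A := by
        intro z hz; rcases hz with rfl | rfl <;> assumption
      have := h3 {x, y} A (hpair x y) hA hsub ⟨y, by simp, hy⟩
      show y ∈ c' {x, y}
      rw [this]; exact ⟨by simp, hy⟩
    -- (ii) elements above everything are chosen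
    have hle2 : ∀ {A : Set α} {y : α}, A.Nonempty → y ∈ A →
        (∀ x ∈ A, le x y) → y ∈ c' A := by
      intro A y hA hyA hall
      obtain ⟨z, hz⟩ := (h1 A hA).1
      have hzA : z ∈ A := (h1 A hA).2 hz
      have hsub : ({z, y} : Set α) ⊆ A := by
        intro w hw; rcases hw with rfl | rfl <;> assumption
      have heq := h3 {z, y} A (hpair z y) hA hsub ⟨z, by simp, hz⟩
      have hzy : y ∈ c' {z, y} := hall z hzA
      rw [heq] at hzy
      exact hzy.2
    -- transitivity of `le`
    have hle_trans : ∀ {x y z : α}, le x y → le y z → le x z := by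
      intro x y z hxy hyz
      have hT : ({x, y, z} : Set α).Nonempty := ⟨x, by simp⟩
      have hxT : x ∈ ({x, y, z} : Set α) := by simp
      have key : ∀ w, w ∈ c' {x, y, z} → z ∈ c' ({x, y, z} : Set α) := by
        intro w hw
        have hwT : w ∈ ({x, y, z} : Set α) := (h1 _ hT).2 hw
        have step_y : y ∈ c' {x, y, z} → z ∈ c' ({x, y, z} : Set α) := by
          intro hy
          have hsub : ({y, z} : Set α) ⊆ {x, y, z} := by
            intro u hu; rcases hu with rfl | rfl <;> simp
          have heq := h3 {y, z} {x, y, z} (hpair y z) hT hsub ⟨y, by simp, hy⟩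
          have hz2 : z ∈ c' {y, z} := hyz
          rw [heq] at hz2
          exact hz2.2
        rcases hwT with rfl | rfl | rfl
        · -- w = x
          have hsub : ({w, y} : Set α) ⊆ {w, y, z} := by
            intro u hu; rcases hu with rfl | rfl <;> simp
          have heq := h3 {w, y} {w, y, z} (hpair w y) hT hsub ⟨w, by simp, hw⟩
          have hy2 : y ∈ c' {w, y} := hxy
          rw [heq] at hy2
          exact step_y hy2.2
        · exact step_y hw
        · exact hw
      obtain ⟨w, hw⟩ := (h1 _ hT).1
      exact hle1 hT hxT (key w hw)
    -- the representative picker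
    set pick : Set α → α := fun E => Classical.epsilon (fun a => a ∈ c' E)
      with hpick_def
    have hpick : ∀ {E : Set α}, E.Nonempty → pick E ∈ c' E := by
      intro E hE
      exact Classical.epsilon_spec ((h1 E hE).1 : ∃ a, a ∈ c' E)
    have hpick_mem : ∀ {E : Set α}, E.Nonempty → pick E ∈ E :=
      fun {E} hE => (h1 E hE).2 (hpick hE)
    refine ⟨fun E F => le (pick E) (pick F), ?_, ?_, ?_, ?_, ?_, ?_⟩
    · -- reflexivity
      intro E hE
      exact hle1 hE.1 (hpick_mem hE.1) (hpick hE.1)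
    · -- transitivity
      intro E _ F _ G _ hEF hFG
      exact hle_trans hEF hFG
    · -- totality
      intro E hE F hF
      have hT : ({pick E, pick F} : Set α).Nonempty := hpair _ _
      obtain ⟨w, hw⟩ := (h1 _ hT).1
      have hwT := (h1 _ hT).2 hw
      rcases hwT with rfl | rfl
      · exact Or.inr (hle1 hT (by simp) hw)
      · exact Or.inl (hle1 hT (by simp) hw)
    · -- Noetherianity
      intro S hS hSne
      obtain ⟨E₁, hE₁⟩ := hSne
      obtain ⟨x₁, hx₁⟩ := (hS hE₁).1
      have hT : (⋃₀ S).Nonempty := ⟨x₁, E₁, hE₁, hx₁⟩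
      have hg : pick (⋃₀ S) ∈ ⋃₀ S := hpick_mem hT
      obtain ⟨E₀, hE₀S, hgE₀⟩ := hg
      refine ⟨E₀, hE₀S, fun e he _ => ?_⟩
      have heN : e.Nonempty := (hS he).1
      have hE₀N : E₀.Nonempty := (hS hE₀S).1
      have h1' : le (pick e) (pick (⋃₀ S)) :=
        hle1 hT ⟨e, he, hpick_mem heN⟩ (hpick hT)
      have h2' : le (pick (⋃₀ S)) (pick E₀) := hle1 hE₀N hgE₀ (hpick hE₀N)
      exact hle_trans h1' h2'
    · -- condition (a)
      intro B hB E hE E' hE' hEB hE'cB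
      have hBne := hmem B hB
      have h2B := h2 B hB
      have : pick E' ∈ c' B := by rw [h2B]; exact hE'cB (hpick_mem hE'.1)
      exact hle1 hBne (hEB (hpick_mem hE.1)) this
    · -- condition (b)
      rintro B hB E hE ⟨⟨-, hmeet⟩, hmax⟩
      have hBne := hmem B hB
      have hB𝓢 : B ∈ 𝓢 := Or.inl hB
      have hcB𝓢 : c B ∈ 𝓢 := Or.inr ⟨B, hB, rfl⟩
      have hEB : E ⊆ B := region_dichotomy hE hB𝓢 hmeet
      obtain ⟨y, hy⟩ := (hc B hB).1
      have hyW : y ∈ ⋃₀ 𝓢 := ⟨c B, hcB𝓢, hy⟩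
      have hE' : rgn 𝓢 y ∈ eulerRegions 𝓢 := rgn_mem hyW
      have hE'cB : rgn 𝓢 y ⊆ c B := rgn_subset hcB𝓢 hy
      have hE'env : rgn 𝓢 y ∈ {E'' ∈ eulerRegions 𝓢 | (E'' ∩ B).Nonempty} :=
        ⟨hE', ⟨y, mem_rgn, (hc B hB).2 hy⟩⟩
      have h2B := h2 B hB
      have hpE' : pick (rgn 𝓢 y) ∈ c' B := by
        rw [h2B]; exact hE'cB (hpick_mem hE'.1)
      have hrEE' : le (pick E) (pick (rgn 𝓢 y)) :=
        hle1 hBne (hEB (hpick_mem hE.1)) hpE'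
      have hrE'E : le (pick (rgn 𝓢 y)) (pick E) := hmax _ hE'env hrEE'
      have hpEcB : pick E ∈ c' B := by
        refine hle2 hBne (hEB (hpick_mem hE.1)) (fun x hx => ?_)
        exact hle_trans (hle1 hBne hx hpE') hrE'E
      rw [h2B] at hpEcB
      exact region_dichotomy hE hcB𝓢 ⟨pick E, hpick_mem hE.1, hpEcB⟩
  · -- Backward direction
    rintro ⟨r, hr1, hr2, hr3, hr4, hr5, hr6⟩
    set W : Set α := ⋃₀ 𝓢 with hW_def
    set R : α → Set α := rgn 𝓢 with hR_def
    set le : α → α → Prop := fun x y => x ∉ W ∨ (x ∈ W ∧ y ∈ W ∧ r (R x) (R y))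
      with hle_def
    have hRmem : ∀ {x : α}, x ∈ W → R x ∈ eulerRegions 𝓢 := fun hx => rgn_mem hx
    have hle_trans : ∀ {x y z : α}, le x y → le y z → le x z := by
      rintro x y z (hx | ⟨hxW, hyW, hxy⟩) hyz
      · exact Or.inl hx
      · rcases hyz with hy | ⟨-, hzW, hyz⟩
        · exact (hy hyW).elim
        · exact Or.inr ⟨hxW, hzW,
            hr2 _ (hRmem hxW) _ (hRmem hyW) _ (hRmem hzW) hxy hyz⟩
    set c' : Set α → Set α := fun A => {y ∈ A | ∀ x ∈ A, le x y} with hc'_def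
    have hc'sub : ∀ A : Set α, c' A ⊆ A := fun A => Set.sep_subset _ _
    have hc'ne : ∀ A : Set α, A.Nonempty → (c' A).Nonempty := by
      intro A hA
      by_cases hAW : (A ∩ W).Nonempty
      · set S : Set (Set α) := R '' (A ∩ W) with hS_def
        have hSsub : S ⊆ eulerRegions 𝓢 := by
          rintro - ⟨x, ⟨-, hxW⟩, rfl⟩; exact hRmem hxW
        have hSne : S.Nonempty := hAW.image _
        obtain ⟨M, hMS, hM⟩ := hr4 S hSsub hSne
        obtain ⟨x₀, ⟨hx₀A, hx₀W⟩, rfl⟩ := hMS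
        refine ⟨x₀, hx₀A, fun x hx => ?_⟩
        by_cases hxW : x ∈ W
        · refine Or.inr ⟨hxW, hx₀W, ?_⟩
          rcases hr3 _ (hRmem hxW) _ (hRmem hx₀W) with h | h
          · exact h
          · exact hM (R x) ⟨x, ⟨hx, hxW⟩, rfl⟩ h
        · exact Or.inl hxW
      · obtain ⟨a, ha⟩ := hA
        exact ⟨a, ha, fun x hx => Or.inl (fun hxW => hAW ⟨x, hx, hxW⟩)⟩
    refine ⟨c', fun A hA => ⟨hc'ne A hA, hc'sub A⟩, ?_, ?_⟩
    · -- extends c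
      intro B hB
      have hB𝓢 : B ∈ 𝓢 := Or.inl hB
      have hcB𝓢 : c B ∈ 𝓢 := Or.inr ⟨B, hB, rfl⟩
      ext y
      constructor
      · rintro ⟨hyB, hymax⟩
        have hyW : y ∈ W := ⟨B, hB𝓢, hyB⟩
        have hRy : R y ∈ eulerRegions 𝓢 := hRmem hyW
        have hsub : R y ⊆ c B := by
          refine hr6 B hB (R y) hRy ⟨⟨hRy, ⟨y, mem_rgn, hyB⟩⟩, ?_⟩
          rintro e ⟨heE, ⟨z, hze, hzB⟩⟩ -
          have hzW : z ∈ W := ⟨B, hB𝓢, hzB⟩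
          have he_eq : e = R z := region_eq_rgn heE hze
          rcases hymax z hzB with h | ⟨-, -, h⟩
          · exact (h hzW).elim
          · rw [he_eq]; exact h
        exact hsub mem_rgn
      · intro hy
        have hyB : y ∈ B := (hc B hB).2 hy
        have hyW : y ∈ W := ⟨c B, hcB𝓢, hy⟩
        refine ⟨hyB, fun x hx => ?_⟩
        have hxW : x ∈ W := ⟨B, hB𝓢, hx⟩
        exact Or.inr ⟨hxW, hyW,
          hr5 B hB (R x) (hRmem hxW) (R y) (hRmem hyW)
            (rgn_subset hB𝓢 hx) (rgn_subset hcB𝓢 hy)⟩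
    · -- WARP
      rintro A B hA hB hAB ⟨x, hxA, hxB⟩
      ext y
      constructor
      · rintro ⟨hyA, hymax⟩
        exact ⟨hyA, hAB hyA, fun z hz => hle_trans (hxB.2 z hz) (hymax x hxA)⟩
      · rintro ⟨hyA, -, hymax⟩
        exact ⟨hyA, fun z hz => hymax z (hAB hz)⟩
end

section
/- If a partial choice c on U with domain Ω has the (α)-lifting property, then for every nonempty family 𝓑 ⊆ Ω (not necessarily ⊆-closed w.r.t. Ω) one has (⋃𝓑) \ ⋃_{B ∈ 𝓑} c̄(B) ≠ ∅. -/
/-- If a partial choice `c` on `U` with domain `Ω` has the (α)-lifting property, then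
for every nonempty `𝓑 ⊆ Ω` one has `(⋃𝓑) \ ⋃_{B ∈ 𝓑} c̄(B) ≠ ∅`. -/
theorem stmt7 {α : Type*} [Nonempty α] (Ω : Set (Set α)) (hΩ : Ω.Nonempty)
    (hmem : ∀ B ∈ Ω, B.Nonempty) (c : Set α → Set α)
    (hc : ∀ B ∈ Ω, (c B).Nonempty ∧ c B ⊆ B)
    (hlift : ∃ c' : Set α → Set α,
        (∀ A : Set α, A.Nonempty → (c' A).Nonempty ∧ c' A ⊆ A) ∧
        (∀ B ∈ Ω, c' B = c B) ∧
        (∀ A B : Set α, A.Nonempty → B.Nonempty → A ⊆ B → A ∩ c' B ⊆ c' A)) :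
    ∀ 𝓑 ⊆ Ω, 𝓑.Nonempty → (⋃₀ 𝓑 \ ⋃ B ∈ 𝓑, (B \ c B)).Nonempty := by
  obtain ⟨c', hc', heq, hα⟩ := hlift
  intro 𝓑 h𝓑 ⟨B₀, hB₀⟩
  have hS : (⋃₀ 𝓑).Nonempty := by
    obtain ⟨x, hx⟩ := hmem B₀ (h𝓑 hB₀)
    exact ⟨x, B₀, hB₀, hx⟩
  obtain ⟨x, hx⟩ := (hc' _ hS).1
  refine ⟨x, (hc' _ hS).2 hx, ?_⟩
  simp only [Set.mem_iUnion, Set.mem_diff, not_exists]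
  rintro B hB ⟨hxB, hxc⟩
  have hBne := hmem B (h𝓑 hB)
  have : x ∈ c' B := hα B (⋃₀ 𝓑) hBne hS (Set.subset_sUnion_of_mem hB) ⟨hxB, hx⟩
  rw [heq B (h𝓑 hB)] at this
  exact hxc this
end

section
/- A partial choice c on U with domain Ω has the (α)-lifting property if and only if the following two conditions hold: (a) for all A, B ∈ Ω, A ⊆ B implies A ∩ c(B) ⊆ c(A); and (b') for every nonempty family 𝓑 ⊆ Ω, one has (⋃𝓑) \ ⋃_{B ∈ 𝓑} c̄(B) ≠ ∅. -/
/-- A partial choice `c` on `U` with domain `Ω` has the (α)-lifting property iff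
(a) for all `A, B ∈ Ω`, `A ⊆ B → A ∩ c B ⊆ c A`, and
(b') for every nonempty `𝓑 ⊆ Ω`, `(⋃𝓑) \ ⋃_{B ∈ 𝓑} c̄(B) ≠ ∅`. -/
theorem stmt8 {α : Type*} [Nonempty α] (Ω : Set (Set α)) (hΩ : Ω.Nonempty)
    (hmem : ∀ B ∈ Ω, B.Nonempty) (c : Set α → Set α)
    (hc : ∀ B ∈ Ω, (c B).Nonempty ∧ c B ⊆ B) :
    (∃ c' : Set α → Set α,
        (∀ A : Set α, A.Nonempty → (c' A).Nonempty ∧ c' A ⊆ A) ∧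
        (∀ B ∈ Ω, c' B = c B) ∧
        (∀ A B : Set α, A.Nonempty → B.Nonempty → A ⊆ B → A ∩ c' B ⊆ c' A)) ↔
      ((∀ A ∈ Ω, ∀ B ∈ Ω, A ⊆ B → A ∩ c B ⊆ c A) ∧
       (∀ 𝓑 ⊆ Ω, 𝓑.Nonempty → (⋃₀ 𝓑 \ ⋃ B ∈ 𝓑, (B \ c B)).Nonempty)) := by
  constructor
  · rintro ⟨c', hne, hext, hα⟩
    constructor
    · intro A hA B hB hAB
      have := hα A B (hmem A hA) (hmem B hB) hAB
      rwa [hext A hA, hext B hB] at this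
    · intro 𝓑 h𝓑 ⟨B0, hB0⟩
      set S := ⋃₀ 𝓑 with hS
      have hSne : S.Nonempty := by
        obtain ⟨x, hx⟩ := hmem B0 (h𝓑 hB0)
        exact ⟨x, B0, hB0, hx⟩
      obtain ⟨x, hx⟩ := (hne S hSne).1
      refine ⟨x, (hne S hSne).2 hx, ?_⟩
      simp only [Set.mem_iUnion]
      rintro ⟨B, hB, hxB, hxc⟩
      have hBS : B ⊆ S := Set.subset_sUnion_of_mem hB
      have : x ∈ c' B := hα B S (hmem B (h𝓑 hB)) hSne hBS ⟨hxB, hx⟩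
      rw [hext B (h𝓑 hB)] at this
      exact hxc this
  · rintro ⟨ha, hb⟩
    refine ⟨fun A => {x ∈ A | ∀ B ∈ Ω, B ⊆ A → x ∈ B → x ∈ c B}, ?_, ?_, ?_⟩
    · intro A hA
      refine ⟨?_, fun x hx => hx.1⟩
      by_cases hex : ∃ B ∈ Ω, B ⊆ A
      · obtain ⟨B0, hB0, hB0A⟩ := hex
        obtain ⟨x, hx1, hx2⟩ := hb {B ∈ Ω | B ⊆ A} (fun B hB => hB.1) ⟨B0, hB0, hB0A⟩
        simp only [Set.mem_iUnion] at hx2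
        push_neg at hx2
        obtain ⟨B, hB, hxB⟩ := hx1
        refine ⟨x, hB.2 hxB, fun B' hB' hB'A hxB' => ?_⟩
        have := hx2 B' ⟨hB', hB'A⟩
        simp only [Set.mem_diff] at this
        by_contra hxc
        exact (this ⟨hxB', hxc⟩).elim
      · obtain ⟨x, hx⟩ := hA
        exact ⟨x, hx, fun B hB hBA _ => absurd ⟨B, hB, hBA⟩ hex⟩
    · intro B hB
      ext x
      simp only [Set.mem_setOf_eq]
      constructor
      · rintro ⟨hxB, h⟩
        exact h B hB subset_rfl hxB
      · intro hx
        exact ⟨(hc B hB).2 hx, fun B' hB' hB'B hxB' => ha B' hB' B hB hB'B ⟨hxB', hx⟩⟩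
    · rintro A B _ _ hAB x ⟨hxA, hxB, h⟩
      exact ⟨hxA, fun B' hB' hB'A hxB' => h B' hB' (hB'A.trans hAB) hxB'⟩
end

section
/- Let U = {x, y, z} with x, y, z pairwise distinct, let Ω be the family of all nonempty subsets of U of cardinality at most 2, and let c be the choice on Ω with c({x,y}) = {x}, c({y,z}) = {y}, c({x,z}) = {z}, and c({v}) = {v} for each v ∈ U. Then c is rationalizable, but there exists no rationalizable total choice c⁺ on U with c⁺(B) = c(B) for all B ∈ Ω. -/
/-- Example: with `U = {x,y,z}`, `Ω` the nonempty subsets of `U` with at most 2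
elements, and `c` the cyclic choice `c {x,y} = {x}`, `c {y,z} = {y}`, `c {x,z} = {z}`,
the choice `c` is rationalizable but admits no rationalizable total extension. -/
theorem stmt9 {α : Type*} (x y z : α) (hxy : x ≠ y) (hyz : y ≠ z) (hxz : x ≠ z)
    (c : Set α → Set α)
    (hcxy : c {x, y} = {x}) (hcyz : c {y, z} = {y}) (hcxz : c {x, z} = {z})
    (hsing : ∀ v ∈ ({x, y, z} : Set α), c {v} = {v}) :
    (∃ r : α → α → Prop,
      ∀ B ∈ {B : Set α | B ⊆ {x, y, z} ∧ B.Nonempty ∧ B.ncard ≤ 2},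
        c B = {a ∈ B | ¬ ∃ b ∈ B, r a b ∧ ¬ r b a}) ∧
    ¬ (∃ c' : Set α → Set α,
        (∀ A : Set α, A ⊆ {x, y, z} → A.Nonempty → (c' A).Nonempty ∧ c' A ⊆ A) ∧
        (∀ B ∈ {B : Set α | B ⊆ {x, y, z} ∧ B.Nonempty ∧ B.ncard ≤ 2}, c' B = c B) ∧
        (∃ r : α → α → Prop, ∀ B : Set α, B ⊆ {x, y, z} → B.Nonempty →
          c' B = {a ∈ B | ¬ ∃ b ∈ B, r a b ∧ ¬ r b a})) := by
  constructor
  · refine ⟨fun a b => (a = y ∧ b = x) ∨ (a = z ∧ b = y) ∨ (a = x ∧ b = z), ?_⟩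
    rintro B ⟨hsub, hne, hcard⟩
    by_cases hx : x ∈ B <;> by_cases hy : y ∈ B <;> by_cases hz : z ∈ B
    · exfalso
      have hB : B = {x, y, z} := by
        apply Set.Subset.antisymm hsub
        intro a ha
        rcases ha with rfl | rfl | rfl <;> assumption
      rw [hB] at hcard
      have : ({x, y, z} : Set α).ncard = 3 :=
        Set.ncard_eq_three.mpr ⟨x, y, z, hxy, hxz, hyz, rfl⟩
      omega
    · have hB : B = {x, y} := by
        apply Set.Subset.antisymm
        · intro a ha
          rcases hsub ha with rfl | rfl | rfl
          · exact Or.inl rfl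
          · exact Or.inr rfl
          · exact absurd ha hz
        · rintro a (rfl | rfl) <;> assumption
      subst hB
      rw [hcxy]
      ext a
      simp only [Set.mem_singleton_iff, Set.mem_setOf_eq, Set.mem_insert_iff]
      constructor
      · rintro rfl
        refine ⟨Or.inl rfl, ?_⟩
        rintro ⟨b, rfl | rfl, h, hnb⟩ <;> simp_all
      · rintro ⟨rfl | rfl, hno⟩
        · rfl
        · exact absurd ⟨x, Or.inl rfl, Or.inl ⟨rfl, rfl⟩, by rintro (⟨h, _⟩ | ⟨h, _⟩ | ⟨_, h⟩) <;> [exact hxy h; exact hxz h; exact hyz h]⟩ hno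
    · have hB : B = {x, z} := by
        apply Set.Subset.antisymm
        · intro a ha
          rcases hsub ha with rfl | rfl | rfl
          · exact Or.inl rfl
          · exact absurd ha hy
          · exact Or.inr rfl
        · rintro a (rfl | rfl) <;> assumption
      subst hB
      rw [hcxz]
      ext a
      simp only [Set.mem_singleton_iff, Set.mem_setOf_eq, Set.mem_insert_iff]
      constructor
      · rintro rfl
        refine ⟨Or.inr rfl, ?_⟩
        rintro ⟨b, rfl | rfl, h, hnb⟩ <;> simp_all
      · rintro ⟨rfl | rfl, hno⟩
        · exact absurd ⟨z, Or.inr rfl, Or.inr (Or.inr ⟨rfl, rfl⟩), by rintro (⟨h, _⟩ | ⟨_, h⟩ | ⟨h, _⟩) <;> [exact hyz h.symm; exact hxy h; exact hxz h.symm]⟩ hno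
        · rfl
    · have hB : B = {x} := by
        apply Set.Subset.antisymm
        · intro a ha
          rcases hsub ha with rfl | rfl | rfl
          · rfl
          · exact absurd ha hy
          · exact absurd ha hz
        · rintro a rfl; assumption
      subst hB
      rw [hsing x (by simp)]
      ext a
      simp only [Set.mem_singleton_iff, Set.mem_setOf_eq]
      constructor
      · rintro rfl
        refine ⟨rfl, ?_⟩
        rintro ⟨b, rfl, h, hnb⟩
        simp_all
      · exact fun h => h.1
    · have hB : B = {y, z} := by
        apply Set.Subset.antisymm
        · intro a ha
          rcases hsub ha with rfl | rfl | rfl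
          · exact absurd ha hx
          · exact Or.inl rfl
          · exact Or.inr rfl
        · rintro a (rfl | rfl) <;> assumption
      subst hB
      rw [hcyz]
      ext a
      simp only [Set.mem_singleton_iff, Set.mem_setOf_eq, Set.mem_insert_iff]
      constructor
      · rintro rfl
        refine ⟨Or.inl rfl, ?_⟩
        rintro ⟨b, rfl | rfl, h, hnb⟩ <;> simp_all
      · rintro ⟨rfl | rfl, hno⟩
        · rfl
        · exact absurd ⟨y, Or.inl rfl, Or.inr (Or.inl ⟨rfl, rfl⟩), by rintro (⟨_, h⟩ | ⟨h, _⟩ | ⟨h, _⟩) <;> [exact hxz h.symm; exact hyz h; exact hxy h.symm]⟩ hno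
    · have hB : B = {y} := by
        apply Set.Subset.antisymm
        · intro a ha
          rcases hsub ha with rfl | rfl | rfl
          · exact absurd ha hx
          · rfl
          · exact absurd ha hz
        · rintro a rfl; assumption
      subst hB
      rw [hsing y (by simp)]
      ext a
      simp only [Set.mem_singleton_iff, Set.mem_setOf_eq]
      constructor
      · rintro rfl
        refine ⟨rfl, ?_⟩
        rintro ⟨b, rfl, h, hnb⟩
        simp_all
      · exact fun h => h.1
    · have hB : B = {z} := by
        apply Set.Subset.antisymm
        · intro a ha
          rcases hsub ha with rfl | rfl | rfl
          · exact absurd ha hx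
          · exact absurd ha hy
          · rfl
        · rintro a rfl; assumption
      subst hB
      rw [hsing z (by simp)]
      ext a
      simp only [Set.mem_singleton_iff, Set.mem_setOf_eq]
      constructor
      · rintro rfl
        refine ⟨rfl, ?_⟩
        rintro ⟨b, rfl, h, hnb⟩
        simp_all
      · exact fun h => h.1
    · exfalso
      obtain ⟨a, ha⟩ := hne
      rcases hsub ha with rfl | rfl | rfl
      · exact hx ha
      · exact hy ha
      · exact hz ha
  · rintro ⟨c', hchoice, hext, r, hrat⟩
    have sub_xy : ({x, y} : Set α) ⊆ {x, y, z} := by intro a; simp; tauto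
    have sub_yz : ({y, z} : Set α) ⊆ {x, y, z} := by intro a; simp; tauto
    have sub_xz : ({x, z} : Set α) ⊆ {x, y, z} := by intro a; simp; tauto
    have ne_xy : ({x, y} : Set α).Nonempty := ⟨x, by simp⟩
    have ne_yz : ({y, z} : Set α).Nonempty := ⟨y, by simp⟩
    have ne_xz : ({x, z} : Set α).Nonempty := ⟨x, by simp⟩
    have hxy' : r y x ∧ ¬ r x y := by
      have h1 : c' {x, y} = c {x, y} :=
        hext _ ⟨sub_xy, ne_xy, by rw [Set.ncard_pair hxy]⟩
      have h2 := hrat {x, y} sub_xy ne_xy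
      rw [h1, hcxy] at h2
      have hy' : (y : α) ∉ ({x} : Set α) := by
        simp only [Set.mem_singleton_iff]
        exact fun h => hxy h.symm
      rw [h2] at hy'
      simp only [Set.mem_setOf_eq, Set.mem_insert_iff, not_and, not_not] at hy'
      obtain ⟨b, hb, hrb⟩ := hy' (by simp)
      rcases hb with rfl | rfl
      · exact hrb
      · exact absurd hrb.1 hrb.2
    have hyz' : r z y ∧ ¬ r y z := by
      have h1 : c' {y, z} = c {y, z} :=
        hext _ ⟨sub_yz, ne_yz, by rw [Set.ncard_pair hyz]⟩
      have h2 := hrat {y, z} sub_yz ne_yz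
      rw [h1, hcyz] at h2
      have hz' : (z : α) ∉ ({y} : Set α) := by
        simp only [Set.mem_singleton_iff]
        exact fun h => hyz h.symm
      rw [h2] at hz'
      simp only [Set.mem_setOf_eq, Set.mem_insert_iff, not_and, not_not] at hz'
      obtain ⟨b, hb, hrb⟩ := hz' (by simp)
      rcases hb with rfl | rfl
      · exact hrb
      · exact absurd hrb.1 hrb.2
    have hzx' : r x z ∧ ¬ r z x := by
      have h1 : c' {x, z} = c {x, z} :=
        hext _ ⟨sub_xz, ne_xz, by rw [Set.ncard_pair hxz]⟩
      have h2 := hrat {x, z} sub_xz ne_xz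
      rw [h1, hcxz] at h2
      have hx' : (x : α) ∉ ({z} : Set α) := by
        simp only [Set.mem_singleton_iff]
        exact fun h => hxz h
      rw [h2] at hx'
      simp only [Set.mem_setOf_eq, Set.mem_insert_iff, not_and, not_not] at hx'
      obtain ⟨b, hb, hrb⟩ := hx' (by simp)
      rcases hb with rfl | rfl
      · exact absurd hrb.1 hrb.2
      · exact hrb
    have hne3 : ({x, y, z} : Set α).Nonempty := ⟨x, by simp⟩
    obtain ⟨a, ha⟩ := (hchoice {x, y, z} subset_rfl hne3).1
    rw [hrat {x, y, z} subset_rfl hne3] at ha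
    obtain ⟨haB, hno⟩ := ha
    rcases haB with rfl | rfl | rfl
    · exact hno ⟨z, by simp, hzx'.1, hzx'.2⟩
    · exact hno ⟨x, by simp, hxy'.1, hxy'.2⟩
    · exact hno ⟨y, by simp, hyz'.1, hyz'.2⟩
end

section
/- Let U = {x, y, z, w} with x, y, z, w pairwise distinct, let Ω be the family of all nonempty subsets of U except {x,w}, {y,z}, {y,w}, {z,w}, and U itself, and let c be the choice on Ω with c({x,y}) = {x,y}, c({x,z}) = {x,z}, c({x,y,z}) = {y,z}, c({x,y,w}) = {x,w}, c({x,z,w}) = {x,z}, c({y,z,w}) = {y,w}, and c({v}) = {v} for each v ∈ U. Then c satisfies axiom (α), but there exists no total choice c⁺ on U with c⁺(B) = c(B) for all B ∈ Ω that satisfies axiom (α). -/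
lemma classify16 {α : Type*} {x y z w : α} {B : Set α} (hB : B ⊆ {x, y, z, w}) :
    B = (∅ : Set α) ∨ B = ({x} : Set α) ∨ B = ({y} : Set α) ∨ B = ({z} : Set α) ∨ B = ({w} : Set α) ∨ B = ({x, y} : Set α) ∨ B = ({x, z} : Set α) ∨ B = ({x, w} : Set α) ∨ B = ({y, z} : Set α) ∨ B = ({y, w} : Set α) ∨ B = ({z, w} : Set α) ∨ B = ({x, y, z} : Set α) ∨ B = ({x, y, w} : Set α) ∨ B = ({x, z, w} : Set α) ∨ B = ({y, z, w} : Set α) ∨ B = ({x, y, z, w} : Set α) := by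
  by_cases hx : x ∈ B <;> by_cases hy : y ∈ B <;> by_cases hz : z ∈ B <;> by_cases hw : w ∈ B
  · have key : B = ({x, y, z, w} : Set α) := by
      ext v
      simp only [Set.mem_insert_iff, Set.mem_singleton_iff, Set.mem_empty_iff_false]
      constructor
      · intro hv
        have h := hB hv
        simp only [Set.mem_insert_iff, Set.mem_singleton_iff] at h
        rcases h with rfl | rfl | rfl | rfl <;> tauto
      · intro hv
        rcases hv with rfl | rfl | rfl | rfl <;> assumption
    tauto
  · have key : B = ({x, y, z} : Set α) := by
      ext v
      simp only [Set.mem_insert_iff, Set.mem_singleton_iff, Set.mem_empty_iff_false]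
      constructor
      · intro hv
        have h := hB hv
        simp only [Set.mem_insert_iff, Set.mem_singleton_iff] at h
        rcases h with rfl | rfl | rfl | rfl <;> tauto
      · intro hv
        rcases hv with rfl | rfl | rfl <;> assumption
    tauto
  · have key : B = ({x, y, w} : Set α) := by
      ext v
      simp only [Set.mem_insert_iff, Set.mem_singleton_iff, Set.mem_empty_iff_false]
      constructor
      · intro hv
        have h := hB hv
        simp only [Set.mem_insert_iff, Set.mem_singleton_iff] at h
        rcases h with rfl | rfl | rfl | rfl <;> tauto
      · intro hv
        rcases hv with rfl | rfl | rfl <;> assumption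
    tauto
  · have key : B = ({x, y} : Set α) := by
      ext v
      simp only [Set.mem_insert_iff, Set.mem_singleton_iff, Set.mem_empty_iff_false]
      constructor
      · intro hv
        have h := hB hv
        simp only [Set.mem_insert_iff, Set.mem_singleton_iff] at h
        rcases h with rfl | rfl | rfl | rfl <;> tauto
      · intro hv
        rcases hv with rfl | rfl <;> assumption
    tauto
  · have key : B = ({x, z, w} : Set α) := by
      ext v
      simp only [Set.mem_insert_iff, Set.mem_singleton_iff, Set.mem_empty_iff_false]
      constructor
      · intro hv
        have h := hB hv
        simp only [Set.mem_insert_iff, Set.mem_singleton_iff] at h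
        rcases h with rfl | rfl | rfl | rfl <;> tauto
      · intro hv
        rcases hv with rfl | rfl | rfl <;> assumption
    tauto
  · have key : B = ({x, z} : Set α) := by
      ext v
      simp only [Set.mem_insert_iff, Set.mem_singleton_iff, Set.mem_empty_iff_false]
      constructor
      · intro hv
        have h := hB hv
        simp only [Set.mem_insert_iff, Set.mem_singleton_iff] at h
        rcases h with rfl | rfl | rfl | rfl <;> tauto
      · intro hv
        rcases hv with rfl | rfl <;> assumption
    tauto
  · have key : B = ({x, w} : Set α) := by
      ext v
      simp only [Set.mem_insert_iff, Set.mem_singleton_iff, Set.mem_empty_iff_false]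
      constructor
      · intro hv
        have h := hB hv
        simp only [Set.mem_insert_iff, Set.mem_singleton_iff] at h
        rcases h with rfl | rfl | rfl | rfl <;> tauto
      · intro hv
        rcases hv with rfl | rfl <;> assumption
    tauto
  · have key : B = ({x} : Set α) := by
      ext v
      simp only [Set.mem_insert_iff, Set.mem_singleton_iff, Set.mem_empty_iff_false]
      constructor
      · intro hv
        have h := hB hv
        simp only [Set.mem_insert_iff, Set.mem_singleton_iff] at h
        rcases h with rfl | rfl | rfl | rfl <;> tauto
      · intro hv
        rcases hv with rfl <;> assumption
    tauto
  · have key : B = ({y, z, w} : Set α) := by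
      ext v
      simp only [Set.mem_insert_iff, Set.mem_singleton_iff, Set.mem_empty_iff_false]
      constructor
      · intro hv
        have h := hB hv
        simp only [Set.mem_insert_iff, Set.mem_singleton_iff] at h
        rcases h with rfl | rfl | rfl | rfl <;> tauto
      · intro hv
        rcases hv with rfl | rfl | rfl <;> assumption
    tauto
  · have key : B = ({y, z} : Set α) := by
      ext v
      simp only [Set.mem_insert_iff, Set.mem_singleton_iff, Set.mem_empty_iff_false]
      constructor
      · intro hv
        have h := hB hv
        simp only [Set.mem_insert_iff, Set.mem_singleton_iff] at h
        rcases h with rfl | rfl | rfl | rfl <;> tauto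
      · intro hv
        rcases hv with rfl | rfl <;> assumption
    tauto
  · have key : B = ({y, w} : Set α) := by
      ext v
      simp only [Set.mem_insert_iff, Set.mem_singleton_iff, Set.mem_empty_iff_false]
      constructor
      · intro hv
        have h := hB hv
        simp only [Set.mem_insert_iff, Set.mem_singleton_iff] at h
        rcases h with rfl | rfl | rfl | rfl <;> tauto
      · intro hv
        rcases hv with rfl | rfl <;> assumption
    tauto
  · have key : B = ({y} : Set α) := by
      ext v
      simp only [Set.mem_insert_iff, Set.mem_singleton_iff, Set.mem_empty_iff_false]
      constructor
      · intro hv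
        have h := hB hv
        simp only [Set.mem_insert_iff, Set.mem_singleton_iff] at h
        rcases h with rfl | rfl | rfl | rfl <;> tauto
      · intro hv
        rcases hv with rfl <;> assumption
    tauto
  · have key : B = ({z, w} : Set α) := by
      ext v
      simp only [Set.mem_insert_iff, Set.mem_singleton_iff, Set.mem_empty_iff_false]
      constructor
      · intro hv
        have h := hB hv
        simp only [Set.mem_insert_iff, Set.mem_singleton_iff] at h
        rcases h with rfl | rfl | rfl | rfl <;> tauto
      · intro hv
        rcases hv with rfl | rfl <;> assumption
    tauto
  · have key : B = ({z} : Set α) := by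
      ext v
      simp only [Set.mem_insert_iff, Set.mem_singleton_iff, Set.mem_empty_iff_false]
      constructor
      · intro hv
        have h := hB hv
        simp only [Set.mem_insert_iff, Set.mem_singleton_iff] at h
        rcases h with rfl | rfl | rfl | rfl <;> tauto
      · intro hv
        rcases hv with rfl <;> assumption
    tauto
  · have key : B = ({w} : Set α) := by
      ext v
      simp only [Set.mem_insert_iff, Set.mem_singleton_iff, Set.mem_empty_iff_false]
      constructor
      · intro hv
        have h := hB hv
        simp only [Set.mem_insert_iff, Set.mem_singleton_iff] at h
        rcases h with rfl | rfl | rfl | rfl <;> tauto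
      · intro hv
        rcases hv with rfl <;> assumption
    tauto
  · have key : B = (∅ : Set α) := by
      ext v
      simp only [Set.mem_insert_iff, Set.mem_singleton_iff, Set.mem_empty_iff_false]
      constructor
      · intro hv
        have h := hB hv
        simp only [Set.mem_insert_iff, Set.mem_singleton_iff] at h
        rcases h with rfl | rfl | rfl | rfl <;> tauto
      · intro hv
        exact hv.elim
    tauto

lemma ne_of_mem_notMem {α : Type*} {a : α} {s t : Set α} (h1 : a ∈ s) (h2 : a ∉ t) :
    s ≠ t := fun h => h2 (h ▸ h1)

set_option maxHeartbeats 1600000 in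
/-- Example: with `U = {x,y,z,w}` and `Ω` all nonempty subsets of `U` except
`{x,w}, {y,z}, {y,w}, {z,w}, U`, the choice given by `c {x,y} = {x,y}`,
`c {x,z} = {x,z}`, `c {x,y,z} = {y,z}`, `c {x,y,w} = {x,w}`, `c {x,z,w} = {x,z}`,
`c {y,z,w} = {y,w}` satisfies axiom (α) but has no (α)-lifting. -/
theorem stmt10 {α : Type*} (x y z w : α)
    (hxy : x ≠ y) (hxz : x ≠ z) (hxw : x ≠ w)
    (hyz : y ≠ z) (hyw : y ≠ w) (hzw : z ≠ w)
    (c : Set α → Set α)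
    (h1 : c {x, y} = {x, y}) (h2 : c {x, z} = {x, z})
    (h3 : c {x, y, z} = {y, z}) (h4 : c {x, y, w} = {x, w})
    (h5 : c {x, z, w} = {x, z}) (h6 : c {y, z, w} = {y, w})
    (hsing : ∀ v ∈ ({x, y, z, w} : Set α), c {v} = {v}) :
    (∀ A ∈ {B : Set α | B ⊆ {x, y, z, w} ∧ B.Nonempty ∧
        B ∉ ({{x, w}, {y, z}, {y, w}, {z, w}, {x, y, z, w}} : Set (Set α))},
      ∀ B ∈ {B : Set α | B ⊆ {x, y, z, w} ∧ B.Nonempty ∧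
        B ∉ ({{x, w}, {y, z}, {y, w}, {z, w}, {x, y, z, w}} : Set (Set α))},
      A ⊆ B → A ∩ c B ⊆ c A) ∧
    ¬ (∃ c' : Set α → Set α,
        (∀ A : Set α, A ⊆ {x, y, z, w} → A.Nonempty → (c' A).Nonempty ∧ c' A ⊆ A) ∧
        (∀ B ∈ {B : Set α | B ⊆ {x, y, z, w} ∧ B.Nonempty ∧
            B ∉ ({{x, w}, {y, z}, {y, w}, {z, w}, {x, y, z, w}} : Set (Set α))},
          c' B = c B) ∧
        (∀ A B : Set α, B ⊆ {x, y, z, w} → A.Nonempty → A ⊆ B →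
          A ∩ c' B ⊆ c' A)) := by
  constructor
  · rintro A ⟨hAsub, hAne, hAex⟩ B ⟨hBsub, hBne, hBex⟩ hAB
    rcases classify16 hAsub with rfl|rfl|rfl|rfl|rfl|rfl|rfl|rfl|rfl|rfl|rfl|rfl|rfl|rfl|rfl|rfl
    · exact absurd rfl hAne.ne_empty
    · rw [hsing x (by simp)]; exact Set.inter_subset_left
    · rw [hsing y (by simp)]; exact Set.inter_subset_left
    · rw [hsing z (by simp)]; exact Set.inter_subset_left
    · rw [hsing w (by simp)]; exact Set.inter_subset_left
    · rw [h1]; exact Set.inter_subset_left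
    · rw [h2]; exact Set.inter_subset_left
    · exact absurd (Or.inl rfl) hAex
    · exact absurd (Or.inr (Or.inl rfl)) hAex
    · exact absurd (Or.inr (Or.inr (Or.inl rfl))) hAex
    · exact absurd (Or.inr (Or.inr (Or.inr (Or.inl rfl)))) hAex
    · rcases classify16 hBsub with rfl|rfl|rfl|rfl|rfl|rfl|rfl|rfl|rfl|rfl|rfl|rfl|rfl|rfl|rfl|rfl <;>
        first
        | exact Set.inter_subset_right
        | simp_all [Set.insert_subset_iff, Ne.symm hxy, Ne.symm hxz, Ne.symm hxw, Ne.symm hyz, Ne.symm hyw, Ne.symm hzw]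
    · rcases classify16 hBsub with rfl|rfl|rfl|rfl|rfl|rfl|rfl|rfl|rfl|rfl|rfl|rfl|rfl|rfl|rfl|rfl <;>
        first
        | exact Set.inter_subset_right
        | simp_all [Set.insert_subset_iff, Ne.symm hxy, Ne.symm hxz, Ne.symm hxw, Ne.symm hyz, Ne.symm hyw, Ne.symm hzw]
    · rcases classify16 hBsub with rfl|rfl|rfl|rfl|rfl|rfl|rfl|rfl|rfl|rfl|rfl|rfl|rfl|rfl|rfl|rfl <;>
        first
        | exact Set.inter_subset_right
        | simp_all [Set.insert_subset_iff, Ne.symm hxy, Ne.symm hxz, Ne.symm hxw, Ne.symm hyz, Ne.symm hyw, Ne.symm hzw]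
    · rcases classify16 hBsub with rfl|rfl|rfl|rfl|rfl|rfl|rfl|rfl|rfl|rfl|rfl|rfl|rfl|rfl|rfl|rfl <;>
        first
        | exact Set.inter_subset_right
        | simp_all [Set.insert_subset_iff, Ne.symm hxy, Ne.symm hxz, Ne.symm hxw, Ne.symm hyz, Ne.symm hyw, Ne.symm hzw]
    · exact absurd (Or.inr (Or.inr (Or.inr (Or.inr rfl)))) hAex
  · rintro ⟨c', hne, hagree, halpha⟩
    have e3 : c' {x, y, z} = {y, z} := by
      rw [hagree {x, y, z} ⟨by simp [Set.insert_subset_iff], ⟨x, by simp⟩, ?_⟩, h3]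
      rintro (h|h|h|h|h)
      · exact ne_of_mem_notMem (by simp : y ∈ ({x,y,z} : Set α))
          (by simp [Ne.symm hxy, hyw]) h
      · exact ne_of_mem_notMem (by simp : x ∈ ({x,y,z} : Set α))
          (by simp [hxy, hxz]) h
      · exact ne_of_mem_notMem (by simp : z ∈ ({x,y,z} : Set α))
          (by simp [Ne.symm hyz, hzw]) h
      · exact ne_of_mem_notMem (by simp : y ∈ ({x,y,z} : Set α))
          (by simp [hyz, hyw]) h
      · exact (ne_of_mem_notMem (by simp : w ∈ ({x,y,z,w} : Set α))
          (by simp [Ne.symm hxw, Ne.symm hyw, Ne.symm hzw]) h.symm).elim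
    have e4 : c' {x, y, w} = {x, w} := by
      rw [hagree {x, y, w} ⟨by simp [Set.insert_subset_iff], ⟨x, by simp⟩, ?_⟩, h4]
      rintro (h|h|h|h|h)
      · exact ne_of_mem_notMem (by simp : y ∈ ({x,y,w} : Set α))
          (by simp [Ne.symm hxy, hyw]) h
      · exact ne_of_mem_notMem (by simp : x ∈ ({x,y,w} : Set α))
          (by simp [hxy, hxz]) h
      · exact ne_of_mem_notMem (by simp : x ∈ ({x,y,w} : Set α))
          (by simp [hxy, hxw]) h
      · exact ne_of_mem_notMem (by simp : x ∈ ({x,y,w} : Set α))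
          (by simp [hxz, hxw]) h
      · exact ne_of_mem_notMem (by simp : z ∈ ({x,y,z,w} : Set α))
          (by simp [Ne.symm hxz, Ne.symm hyz, hzw]) h.symm |>.elim
    have e5 : c' {x, z, w} = {x, z} := by
      rw [hagree {x, z, w} ⟨by simp [Set.insert_subset_iff], ⟨x, by simp⟩, ?_⟩, h5]
      rintro (h|h|h|h|h)
      · exact ne_of_mem_notMem (by simp : z ∈ ({x,z,w} : Set α))
          (by simp [Ne.symm hxz, hzw]) h
      · exact ne_of_mem_notMem (by simp : x ∈ ({x,z,w} : Set α))
          (by simp [hxy, hxz]) h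
      · exact ne_of_mem_notMem (by simp : x ∈ ({x,z,w} : Set α))
          (by simp [hxy, hxw]) h
      · exact ne_of_mem_notMem (by simp : x ∈ ({x,z,w} : Set α))
          (by simp [hxz, hxw]) h
      · exact ne_of_mem_notMem (by simp : y ∈ ({x,y,z,w} : Set α))
          (by simp [Ne.symm hxy, hyz, hyw]) h.symm |>.elim
    have e6 : c' {y, z, w} = {y, w} := by
      rw [hagree {y, z, w} ⟨by simp [Set.insert_subset_iff], ⟨y, by simp⟩, ?_⟩, h6]
      rintro (h|h|h|h|h)
      · exact ne_of_mem_notMem (by simp : y ∈ ({y,z,w} : Set α))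
          (by simp [Ne.symm hxy, hyw]) h
      · exact ne_of_mem_notMem (by simp : w ∈ ({y,z,w} : Set α))
          (by simp [Ne.symm hyw, Ne.symm hzw]) h
      · exact ne_of_mem_notMem (by simp : z ∈ ({y,z,w} : Set α))
          (by simp [Ne.symm hyz, hzw]) h
      · exact ne_of_mem_notMem (by simp : y ∈ ({y,z,w} : Set α))
          (by simp [hyz, hyw]) h
      · exact ne_of_mem_notMem (by simp : x ∈ ({x,y,z,w} : Set α))
          (by simp [hxy, hxz, hxw]) h.symm |>.elim
    obtain ⟨⟨v, hv⟩, hsub⟩ := hne {x, y, z, w} (subset_refl _) ⟨x, by simp⟩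
    have hvU : v ∈ ({x, y, z, w} : Set α) := hsub hv
    rcases hvU with h|h|h|h <;> rw [h] at hv
    · have hx3 : x ∈ c' {x, y, z} :=
        halpha {x, y, z} {x, y, z, w} (subset_refl _) ⟨x, by simp⟩
          (by simp [Set.insert_subset_iff]) ⟨by simp, hv⟩
      rw [e3] at hx3
      rcases hx3 with h'|h'
      · exact hxy h'
      · exact hxz h'
    · have hx3 : y ∈ c' {x, y, w} :=
        halpha {x, y, w} {x, y, z, w} (by simp [Set.insert_subset_iff])
          ⟨y, by simp⟩ (by simp [Set.insert_subset_iff]) ⟨by simp, hv⟩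
      rw [e4] at hx3
      rcases hx3 with h'|h'
      · exact hxy h'.symm
      · exact hyw h'
    · have hx3 : z ∈ c' {y, z, w} :=
        halpha {y, z, w} {x, y, z, w} (by simp [Set.insert_subset_iff])
          ⟨z, by simp⟩ (by simp [Set.insert_subset_iff]) ⟨by simp, hv⟩
      rw [e6] at hx3
      rcases hx3 with h'|h'
      · exact hyz h'.symm
      · exact hzw h'
    · have hx3 : w ∈ c' {x, z, w} :=
        halpha {x, z, w} {x, y, z, w} (by simp [Set.insert_subset_iff])
          ⟨w, by simp⟩ (by simp [Set.insert_subset_iff]) ⟨by simp, hv⟩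
      rw [e5] at hx3
      rcases hx3 with h'|h'
      · exact hxw h'.symm
      · exact hzw h'.symm
end
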